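/- For every u ∈ ℝ and ε ≥ 0, |f_ε(u) - f_0(u)| ≤ ε · |u|^{2^*-1} · ln ln(e + |u|), where f_ε(u) = |u|^{2^*-2} u / [ln(e+|u|)]^ε and 2^* = 2N/(N-2) for an integer N ≥ 3. -/

import Mathlib

/-!
With `L = ln(e + |u|) ≥ 1` we have `f_ε(u) - f_0(u) = f_0(u) (L^{-ε} - 1)`, and
`0 ≤ 1 - L^{-ε} ≤ ln(L^ε) = ε ln L` by the elementary bound `1 - 1/x ≤ ln x`.
-/

open Real

/-- `f_ε(u) = |u|^{2^*-2} u / [ln(e+|u|)]^ε` with `2^* = 2N/(N-2)`. -/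
noncomputable def fEps (N : ℕ) (ε u : ℝ) : ℝ :=
  |u| ^ (2 * (N : ℝ) / ((N : ℝ) - 2) - 2) * u / (Real.log (Real.exp 1 + |u|)) ^ ε

lemma one_sub_inv_rpow_le_mul_log {L : ℝ} (hL : 0 < L) (ε : ℝ) :
    1 - (L ^ ε)⁻¹ ≤ ε * log L := by
  simpa [log_rpow hL] using one_sub_inv_le_log_of_pos (rpow_pos_of_pos hL ε)

lemma abs_div_rpow_sub_self_le (a : ℝ) {L ε : ℝ} (hL : 1 ≤ L) (hε : 0 ≤ ε) :
    |a / L ^ ε - a| ≤ ε * |a| * log L := by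
  have hinv : (L ^ ε)⁻¹ ≤ 1 := inv_le_one_of_one_le₀ (one_le_rpow hL hε)
  calc |a / L ^ ε - a| = |a| * (1 - (L ^ ε)⁻¹) := by
        rw [div_eq_mul_inv, show a * (L ^ ε)⁻¹ - a = -(a * (1 - (L ^ ε)⁻¹)) by ring,
          abs_neg, abs_mul, abs_of_nonneg (sub_nonneg.2 hinv)]
    _ ≤ |a| * (ε * log L) := by
        gcongr; exact one_sub_inv_rpow_le_mul_log (by linarith) ε
    _ = ε * |a| * log L := by ring

lemma abs_rpow_mul_self_le (u q : ℝ) : |(|u| ^ q * u)| ≤ |u| ^ (q + 1) := by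
  rcases eq_or_ne u 0 with rfl | hu
  · simpa using rpow_nonneg le_rfl (q + 1)
  rw [abs_mul, abs_of_nonneg (rpow_nonneg (abs_nonneg u) q),
    rpow_add_one (abs_ne_zero.2 hu)]

lemma one_le_log_exp_one_add_abs (u : ℝ) : 1 ≤ log (exp 1 + |u|) := by
  rw [le_log_iff_exp_le (by positivity)]
  linarith [abs_nonneg u]

theorem stmt0_general (N : ℕ) (u ε : ℝ) (hε : 0 ≤ ε) :
    |fEps N ε u - fEps N 0 u| ≤
      ε * |u| ^ (2 * (N : ℝ) / ((N : ℝ) - 2) - 1) *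
        Real.log (Real.log (Real.exp 1 + |u|)) := by
  set p := 2 * (N : ℝ) / ((N : ℝ) - 2)
  set L := log (exp 1 + |u|)
  have hL : 1 ≤ L := one_le_log_exp_one_add_abs u
  have ha : |(|u| ^ (p - 2) * u)| ≤ |u| ^ (p - 1) := by
    simpa [show p - 2 + 1 = p - 1 by ring] using abs_rpow_mul_self_le u (p - 2)
  calc |fEps N ε u - fEps N 0 u| = |(|u| ^ (p - 2) * u) / L ^ ε - |u| ^ (p - 2) * u| := by
        simp [fEps, p, L]
    _ ≤ ε * |(|u| ^ (p - 2) * u)| * log L := abs_div_rpow_sub_self_le _ hL hε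
    _ ≤ ε * |u| ^ (p - 1) * log L := by gcongr; exact log_nonneg hL

theorem stmt0 (N : ℕ) (hN : 3 ≤ N) (u ε : ℝ) (hε : 0 ≤ ε) :
    |fEps N ε u - fEps N 0 u| ≤
      ε * |u| ^ (2 * (N : ℝ) / ((N : ℝ) - 2) - 1) *
        Real.log (Real.log (Real.exp 1 + |u|)) :=
  stmt0_general N u ε hε
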